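/- Let (π^{ij}) be a constant antisymmetric 2n×2n complex matrix and X = Σ_j X^j ∂_j a vector field on ℝ^{2n} whose components X^j are polynomials of degree at most one, satisfying Σ_l ( π^{lk} ∂_l X^j + π^{jl} ∂_l X^k ) = π^{jk} for all j,k (i.e. X rescales the Poisson structure, as the classical Liouville vector field X = Σ_i p_i ∂/∂p_i does for the standard symplectic structure on ℝ^{2n} = T*ℝ^n). Then ℏ∂_ℏ + X is a quantum Liouville operator, i.e. a derivation of the Moyal star-product: (ℏ∂_ℏ + X)(F⋆G) = ((ℏ∂_ℏ + X)F)⋆G + F⋆((ℏ∂_ℏ + X)G) for all F,G ∈ C^∞(ℝ^{2n},ℂ)[[ℏ]]. -/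

import Mathlib

/-!  Common definitions: formal Weyl algebras, Moyal products, Weyl-bundle valued
differential forms on ℝ^{2n}, Fedosov connections, star-products on smooth functions,
multidifferential operators and Hochschild coboundaries.  -/

noncomputable section
namespace StarPaper

open scoped BigOperators

/-! ### Formal power series in y -/

/-- The fiber coefficient ring `ℂ[[y^1, …, y^N]]`. -/
abbrev Wc (N : ℕ) := MvPowerSeries (Fin N) ℂ

/-- Build a formal power series from its coefficient function. -/
def Wc.mk {N : ℕ} (f : (Fin N →₀ ℕ) → ℂ) : Wc N := f

/-- Formal partial derivative `∂/∂y^i` on `ℂ[[y]]`. -/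
def yD {N : ℕ} (i : Fin N) (a : Wc N) : Wc N :=
  Wc.mk fun β => ((β i : ℂ) + 1) * MvPowerSeries.coeff (R := ℂ) (β + Finsupp.single i 1) a

/-- Formal iterated partial derivative `∂^α` on `ℂ[[y]]`. -/
def yDM {N : ℕ} (α : Fin N →₀ ℕ) (a : Wc N) : Wc N :=
  Wc.mk fun β =>
    (∏ i : Fin N, (((β i + α i).factorial : ℂ) / ((β i).factorial : ℂ))) *
      MvPowerSeries.coeff (R := ℂ) (β + α) a

/-- Iterated derivatives along a tuple of directions. -/
def iterD {R : Type*} {N : ℕ} (D : Fin N → R → R) : {k : ℕ} → (Fin k → Fin N) → R → R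
  | 0, _, a => a
  | _ + 1, v, a => D (v 0) (iterD D (fun t => v t.succ) a)

/-- The `k`-th term of the Moyal–Weyl product for a constant matrix `π`:
`((-iℏ/2)^k/k!) Σ π^{i₁j₁}⋯π^{i_kj_k} (∂^k a/∂y^{i₁}⋯) (∂^k b/∂y^{j₁}⋯)`. -/
def moyalTerm {R : Type*} [CommRing R] [Module ℂ R] {N : ℕ}
    (D : Fin N → R → R) (π : Matrix (Fin N) (Fin N) ℂ) (k : ℕ) (a b : R) : R :=
  ((-Complex.I / 2) ^ k / (Nat.factorial k : ℂ)) •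
    ∑ i : Fin k → Fin N, ∑ j : Fin k → Fin N,
      (∏ t, π (i t) (j t)) • (iterD D i a * iterD D j b)

/-- Moyal product on formal power series `Σ_m ℏ^m F_m` (coefficients `F : ℕ → R`). -/
def moyalN {R : Type*} [CommRing R] [Module ℂ R] {N : ℕ} (D : Fin N → R → R)
    (π : Matrix (Fin N) (Fin N) ℂ) (F G : ℕ → R) : ℕ → R :=
  fun m => ∑ k ∈ Finset.range (m + 1), ∑ l ∈ Finset.range (m - k + 1),
    moyalTerm D π k (F l) (G (m - k - l))

/-- Moyal product on formal Laurent series `Σ_m ℏ^m F_m` (coefficients `F : ℤ → R`);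
the sum over contributions is finite for series bounded below in `ℏ`-degree. -/
def moyalZ {R : Type*} [CommRing R] [Module ℂ R] {N : ℕ} (D : Fin N → R → R)
    (π : Matrix (Fin N) (Fin N) ℂ) (F G : ℤ → R) : ℤ → R :=
  fun m => ∑ᶠ p : ℕ × ℤ, moyalTerm D π p.1 (F p.2) (G (m - p.1 - p.2))

/-- Moyal term for an `ℏ`-dependent matrix `π(ℏ) = π₀ + ℏπ₁`: the part of the `k`-th
Moyal term in which the product of matrix entries contributes `ℏ^d`. -/
def moyalTermH {R : Type*} [CommRing R] [Module ℂ R] {N : ℕ} (D : Fin N → R → R)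
    (π0 π1 : Matrix (Fin N) (Fin N) ℂ) (k d : ℕ) (a b : R) : R :=
  ((-Complex.I / 2) ^ k / (Nat.factorial k : ℂ)) •
    ∑ i : Fin k → Fin N, ∑ j : Fin k → Fin N,
      (∑ T ∈ Finset.univ.powerset.filter (fun T : Finset (Fin k) => T.card = d),
          (∏ t ∈ T, π1 (i t) (j t)) * ∏ t ∈ Tᶜ, π0 (i t) (j t)) •
        (iterD D i a * iterD D j b)

/-- Moyal product built from the `ℏ`-dependent matrix `π(ℏ) = π₀ + ℏπ₁`. -/
def moyalNH {R : Type*} [CommRing R] [Module ℂ R] {N : ℕ} (D : Fin N → R → R)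
    (π0 π1 : Matrix (Fin N) (Fin N) ℂ) (F G : ℕ → R) : ℕ → R :=
  fun m => ∑ k ∈ Finset.range (m + 1), ∑ d ∈ Finset.range (m - k + 1),
    ∑ l ∈ Finset.range (m - k - d + 1),
      moyalTermH D π0 π1 k d (F l) (G (m - k - d - l))

/-- The standard Poisson matrix `π` on `ℝ^{2n}` (inverse of the standard symplectic
matrix `ω`, normalized by `Σ_m ω_{jm} π^{mn} = δ_j^n`). -/
def stdPi (n : ℕ) : Matrix (Fin (2 * n)) (Fin (2 * n)) ℂ :=
  Matrix.of fun i j =>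
    if (i : ℕ) + n = (j : ℕ) then 1 else if (j : ℕ) + n = (i : ℕ) then -1 else 0

/-- The standard symplectic matrix `ω_{ij}`. -/
def stdOmega (n : ℕ) : Matrix (Fin (2 * n)) (Fin (2 * n)) ℂ := -stdPi n

/-! ### The formal Weyl algebra `W = ℂ[[y,ℏ]]` -/

/-- The formal Weyl algebra as `ℏ`-coefficient sequences. -/
abbrev Wa (N : ℕ) := ℕ → Wc N

/-- Moyal–Weyl product on `W` for a constant matrix `π`. -/
def wmulPi {N : ℕ} (π : Matrix (Fin N) (Fin N) ℂ) (a b : Wa N) : Wa N := moyalN yD π a b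

/-- Moyal–Weyl product on `W` for the standard symplectic Poisson matrix. -/
def wmul {n : ℕ} (a b : Wa (2 * n)) : Wa (2 * n) := wmulPi (stdPi n) a b

/-- The unit `1 ∈ W`. -/
def oneW (N : ℕ) : Wa N := fun m => if m = 0 then 1 else 0

/-- Scalar multiplication by a formal power series `s ∈ ℂ[[ℏ]]` (given by its
coefficients `s : ℕ → ℂ`). -/
def hsmul {N : ℕ} (s : ℕ → ℂ) (a : Wa N) : Wa N :=
  fun m => ∑ l ∈ Finset.range (m + 1), s l • a (m - l)

/-- The operator `E = -(i/2) Σ_j y^j ∂/∂y^j` on `ℂ[[y]]`. -/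
def EulW {N : ℕ} (a : Wc N) : Wc N :=
  Wc.mk fun β => -Complex.I / 2 * (∑ i : Fin N, (β i : ℂ)) * MvPowerSeries.coeff (R := ℂ) β a

/-- `E` on the Weyl algebra, acting on each `ℏ`-coefficient. -/
def EulWa {N : ℕ} (a : Wa N) : Wa N := fun m => EulW (a m)

/-- Termwise derivative `∂/∂ℏ`. -/
def hD {N : ℕ} (a : Wa N) : Wa N := fun m => (((m + 1 : ℕ) : ℂ)) • a (m + 1)

/-- Multiplication by `ℏ`. -/
def hM {N : ℕ} (a : Wa N) : Wa N := fun m => match m with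
  | 0 => 0
  | Nat.succ m' => a m'

/-- Division by `ℏ` (exact on elements divisible by `ℏ`; discards the constant term). -/
def hInv {N : ℕ} (a : Wa N) : Wa N := fun m => a (m + 1)

/-- The `ℏ`-derivative of the Moyal–Weyl product structure:
`c₁(a,b) = ∂(a⋆b)/∂ℏ − (∂a/∂ℏ)⋆b − a⋆(∂b/∂ℏ)`. -/
def c1W {n : ℕ} (a b : Wa (2 * n)) : Wa (2 * n) :=
  hD (wmul a b) - wmul (hD a) b - wmul a (hD b)

/-! ### W-valued differential forms on ℝ^{2n} -/

/-- Points of `ℝ^{2n}`. -/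
abbrev Pt (n : ℕ) := Fin (2 * n) → ℝ

/-- `W`-valued exterior forms on `ℝ^{2n}`: the component at a finite index set
`S = {j₁ < ⋯ < j_q}` is the coefficient of `dx^{j₁} ∧ ⋯ ∧ dx^{j_q}`. -/
abbrev WF (n : ℕ) := Finset (Fin (2 * n)) → Pt n → Wa (2 * n)

/-- Sign `(-1)^{#{j ∈ S, j < i}}` for inserting `dx^i` in front of `dx^S`. -/
def insSign {N : ℕ} (S : Finset (Fin N)) (i : Fin N) : ℂ :=
  (-1) ^ (S.filter fun j => j < i).card

/-- Koszul sign for merging `dx^{S₁} ∧ dx^{S₂}` into increasing order. -/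
def shuffleSign {N : ℕ} (S1 S2 : Finset (Fin N)) : ℂ :=
  (-1) ^ ((S1 ×ˢ S2).filter fun p => p.2 < p.1).card

/-- `∂/∂y^i` on the Weyl algebra. -/
def yDa {N : ℕ} (i : Fin N) (w : Wa N) : Wa N := fun m => yD i (w m)

/-- The operator `δ a = Σ_i dx^i ∧ ∂a/∂y^i`. -/
def deltaW {n : ℕ} (a : WF n) : WF n :=
  fun S x => ∑ i ∈ S, insSign S i • yDa i (a (S.erase i) x)

/-- The partial derivative `∂/∂x^i` of a `W`-valued function, taken coefficientwise. -/
def xD {n : ℕ} (i : Fin (2 * n)) (f : Pt n → Wa (2 * n)) (x : Pt n) : Wa (2 * n) :=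
  fun m => Wc.mk fun β =>
    fderiv ℝ (fun x' => MvPowerSeries.coeff (R := ℂ) β (f x' m)) x (Pi.single i 1)

/-- The exterior derivative `d a = Σ_i dx^i ∧ ∂a/∂x^i` on `W`-valued forms. -/
def extD {n : ℕ} (a : WF n) : WF n :=
  fun S x => ∑ i ∈ S, insSign S i • xD i (a (S.erase i)) x

/-- The product on `W`-valued forms: Moyal–Weyl product combined with wedge product. -/
def wMulF {n : ℕ} (a b : WF n) : WF n :=
  fun S x => ∑ S1 ∈ S.powerset, shuffleSign S1 (S \ S1) • wmul (a S1 x) (b (S \ S1) x)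

/-- Graded commutator `[r, a] = r⋆a − (−1)^{|a|} a⋆r` with a form `r` of degree 1. -/
def comm1 {n : ℕ} (r a : WF n) : WF n :=
  fun S x => wMulF r a S x - (-1 : ℂ) ^ (S.card - 1) • wMulF a r S x

/-- Graded commutator `[u, a] = u⋆a − a⋆u` with a form `u` of even degree. -/
def commE {n : ℕ} (u a : WF n) : WF n := fun S x => wMulF u a S x - wMulF a u S x

/-- The connection `D = −δ + d + (i/ℏ)[r, ·]` determined by a `W`-valued 1-form `r`. -/
def fedD {n : ℕ} (r a : WF n) : WF n :=
  fun S x => -deltaW a S x + extD a S x + Complex.I • hInv (comm1 r a S x)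

/-- A `W`-valued form has smooth coefficients. -/
def WF.Smooth {n : ℕ} (a : WF n) : Prop :=
  ∀ S m β, ContDiff ℝ (⊤ : ℕ∞) fun x => MvPowerSeries.coeff (R := ℂ) β (a S x m)

/-- A `W`-valued form is homogeneous of form-degree `q`. -/
def isForm {n : ℕ} (q : ℕ) (a : WF n) : Prop := ∀ S, S.card ≠ q → a S = 0

/-- A `W`-valued form is scalar: all coefficients are independent of the `y` variables. -/
def isScalar {n : ℕ} (a : WF n) : Prop :=
  ∀ S x m β, β ≠ 0 → MvPowerSeries.coeff (R := ℂ) β (a S x m) = 0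

/-- The constant standard symplectic 2-form `ω = (1/2) Σ ω_{ij} dx^i ∧ dx^j`. -/
def omegaF (n : ℕ) : WF n :=
  fun S _ m =>
    if m = 0 then
      MvPowerSeries.C (σ := Fin (2 * n)) (R := ℂ)
        (∑ i : Fin (2 * n), ∑ j : Fin (2 * n),
          if i < j ∧ S = {i, j} then stdOmega n i j else 0)
    else 0

/-- The curvature `Ω = ω + δr − dr − (i/ℏ) r⋆r` of the connection `−δ + d + (i/ℏ)[r,·]`. -/
def curv {n : ℕ} (r : WF n) : WF n :=
  fun S x => omegaF n S x + deltaW r S x - extD r S x - Complex.I • hInv (wMulF r r S x)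

/-- The operator `δ⁻¹`, acting as `(1/(p+q)) Σ_k y^k ι_k` on the part of `y`-degree `p`
and form-degree `q` (and as `0` for `p = q = 0`). -/
def deltaInv {n : ℕ} (a : WF n) : WF n :=
  fun S x m => Wc.mk fun β =>
    ((((β.sum fun _ e => e) + S.card : ℕ) : ℂ))⁻¹ *
      ∑ k : Fin (2 * n),
        if k ∉ S ∧ 1 ≤ β k then
          insSign S k * MvPowerSeries.coeff (R := ℂ) (β - Finsupp.single k 1) (a (insert k S) x m)
        else 0

/-! ### x-independent W-valued exterior forms (the graded algebra W⊗Λ) -/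

/-- `W`-valued exterior forms with constant coefficients. -/
abbrev WL (n : ℕ) := Finset (Fin (2 * n)) → Wa (2 * n)

/-- `δ` on `W ⊗ Λ`. -/
def deltaWL {n : ℕ} (a : WL n) : WL n :=
  fun S => ∑ i ∈ S, insSign S i • yDa i (a (S.erase i))

/-- Product (Moyal combined with wedge) on `W ⊗ Λ`. -/
def wMulL {n : ℕ} (a b : WL n) : WL n :=
  fun S => ∑ S1 ∈ S.powerset, shuffleSign S1 (S \ S1) • wmul (a S1) (b (S \ S1))

/-- `E` on `W ⊗ Λ`, acting on the `W`-coefficients. -/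
def EulL {n : ℕ} (a : WL n) : WL n := fun S => EulWa (a S)

/-- The `W`-valued 1-form `Σ_{i,j} ω_{ij} y^i dx^j`. -/
def oydxW (n : ℕ) : WL n :=
  fun S m =>
    if m = 0 then
      ∑ j : Fin (2 * n),
        (if S = {j} then ∑ i : Fin (2 * n), stdOmega n i j • MvPowerSeries.X i else 0)
    else 0

/-- The 1-form `K₀ = −(Er − iℏ ∂r/∂ℏ + i r + (i/2) Σ ω_{ij} y^i dx^j)`. -/
def K0 {n : ℕ} (r : WF n) : WF n :=
  fun S x =>
    -(EulWa (r S x) - Complex.I • hM (hD (r S x)) + Complex.I • r S x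
      + (Complex.I / 2) • oydxW n S)

/-- The quantum Liouville-type operator `ρ(u) = (ℏ/i) ∂u/∂ℏ + E u`. -/
def rhoW {n : ℕ} (u : WF n) : WF n :=
  fun S x m => (-Complex.I * (m : ℂ)) • u S x m + EulW (u S x m)

/-- `c₁` extended to `W`-valued forms. -/
def c1F {n : ℕ} (a b : WF n) : WF n :=
  fun S x => ∑ S1 ∈ S.powerset, shuffleSign S1 (S \ S1) • c1W (a S1 x) (b (S \ S1) x)

/-! ### The Laurent (ℏ-inverted) Weyl algebra and forms -/

/-- The extended Weyl algebra `W⁺ = ℂ[[y]][ℏ⁻¹,ℏ]]` as `ℏ`-coefficient sequences. -/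
abbrev WaZ (N : ℕ) := ℤ → Wc N

/-- Moyal–Weyl product on `W⁺` for a constant matrix `π`. -/
def wmulZPi {N : ℕ} (π : Matrix (Fin N) (Fin N) ℂ) (a b : WaZ N) : WaZ N := moyalZ yD π a b

/-- Moyal–Weyl product on `W⁺` for the standard symplectic Poisson matrix. -/
def wmulZ {n : ℕ} (a b : WaZ (2 * n)) : WaZ (2 * n) := wmulZPi (stdPi n) a b

/-- `W⁺`-valued exterior forms on `ℝ^{2n}`. -/
abbrev WFZ (n : ℕ) := Finset (Fin (2 * n)) → Pt n → WaZ (2 * n)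

/-- `∂/∂y^i` on `W⁺`. -/
def yDaZ {N : ℕ} (i : Fin N) (w : WaZ N) : WaZ N := fun m => yD i (w m)

/-- `δ` on `W⁺`-valued forms. -/
def deltaZ {n : ℕ} (a : WFZ n) : WFZ n :=
  fun S x => ∑ i ∈ S, insSign S i • yDaZ i (a (S.erase i) x)

/-- `∂/∂x^i` on `W⁺`-valued functions. -/
def xDZ {n : ℕ} (i : Fin (2 * n)) (f : Pt n → WaZ (2 * n)) (x : Pt n) : WaZ (2 * n) :=
  fun m => Wc.mk fun β =>
    fderiv ℝ (fun x' => MvPowerSeries.coeff (R := ℂ) β (f x' m)) x (Pi.single i 1)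

/-- Exterior derivative on `W⁺`-valued forms. -/
def extDZ {n : ℕ} (a : WFZ n) : WFZ n :=
  fun S x => ∑ i ∈ S, insSign S i • xDZ i (a (S.erase i)) x

/-- Product on `W⁺`-valued forms. -/
def wMulZF {n : ℕ} (a b : WFZ n) : WFZ n :=
  fun S x => ∑ S1 ∈ S.powerset, shuffleSign S1 (S \ S1) • wmulZ (a S1 x) (b (S \ S1) x)

/-- Graded commutator with a 1-form, on `W⁺`-valued forms. -/
def comm1Z {n : ℕ} (r a : WFZ n) : WFZ n :=
  fun S x => wMulZF r a S x - (-1 : ℂ) ^ (S.card - 1) • wMulZF a r S x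

/-- Division by `ℏ` on `W⁺` (exact: a shift of Laurent coefficients). -/
def shiftZ {N : ℕ} (a : WaZ N) : WaZ N := fun m => a (m + 1)

/-- The connection `D = −δ + d + (i/ℏ)[r,·]` on `W⁺`-valued forms. -/
def fedDZ {n : ℕ} (r a : WFZ n) : WFZ n :=
  fun S x => -deltaZ a S x + extDZ a S x + Complex.I • shiftZ (comm1Z r a S x)

/-- Termwise `∂/∂ℏ` on `W⁺`. -/
def hDZ {N : ℕ} (a : WaZ N) : WaZ N := fun m => ((m + 1 : ℤ) : ℂ) • a (m + 1)

/-- `∂/∂ℏ` on `W⁺`-valued forms. -/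
def hDZF {n : ℕ} (a : WFZ n) : WFZ n := fun S x => hDZ (a S x)

/-- `E` on `W⁺`. -/
def EulZ {N : ℕ} (a : WaZ N) : WaZ N := fun m => EulW (a m)

/-- `E` on `W⁺`-valued forms. -/
def EulZF {n : ℕ} (a : WFZ n) : WFZ n := fun S x => EulZ (a S x)

/-- `c₁` on `W⁺`. -/
def c1Za {n : ℕ} (a b : WaZ (2 * n)) : WaZ (2 * n) :=
  hDZ (wmulZ a b) - wmulZ (hDZ a) b - wmulZ a (hDZ b)

/-- `c₁` on `W⁺`-valued forms. -/
def c1ZF {n : ℕ} (a b : WFZ n) : WFZ n :=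
  fun S x => ∑ S1 ∈ S.powerset, shuffleSign S1 (S \ S1) • c1Za (a S1 x) (b (S \ S1) x)

/-- Smoothness of the coefficients of a `W⁺`-valued form. -/
def WFZ.Smooth {n : ℕ} (a : WFZ n) : Prop :=
  ∀ S m β, ContDiff ℝ (⊤ : ℕ∞) fun x => MvPowerSeries.coeff (R := ℂ) β (a S x m)

/-- Homogeneity of form-degree `q` for `W⁺`-valued forms. -/
def isFormZ {n : ℕ} (q : ℕ) (a : WFZ n) : Prop := ∀ S, S.card ≠ q → a S = 0

/-- A `W⁺`-valued form has power series coefficients (no negative powers of `ℏ`). -/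
def PSupp {n : ℕ} (a : WFZ n) : Prop := ∀ S x m, m < 0 → a S x m = 0

/-- A Laurent series is bounded below in `ℏ`-degree. -/
def BddZ {α : Type*} [Zero α] (f : ℤ → α) : Prop :=
  ∃ N : ℕ, ∀ m : ℤ, m < -(N : ℤ) → f m = 0

/-! ### Smooth functions and star-products on ℝ^N -/

/-- Complex-valued functions on `ℝ^N`. -/
abbrev SmFn (N : ℕ) := (Fin N → ℝ) → ℂ

/-- Partial derivative `∂/∂x^i` of a (smooth) function. -/
def xDf {N : ℕ} (i : Fin N) (f : SmFn N) : SmFn N := fun x => fderiv ℝ f x (Pi.single i 1)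

/-- Iterated partial derivative `∂^α`. -/
def xDfM {N : ℕ} (α : Fin N →₀ ℕ) (f : SmFn N) : SmFn N :=
  (List.finRange N).foldr (fun i g => (xDf i)^[α i] g) f

/-- Formal power series with function coefficients: `C^∞(ℝ^N,ℂ)[[ℏ]]`. -/
abbrev SmSer (N : ℕ) := ℕ → SmFn N

/-- Formal Laurent series with function coefficients: `C^∞(ℝ^N,ℂ)[ℏ⁻¹,ℏ]]`. -/
abbrev SmLau (N : ℕ) := ℤ → SmFn N

/-- All coefficients of a series are smooth. -/
def SmSer.Smooth {N : ℕ} (F : SmSer N) : Prop := ∀ m, ContDiff ℝ (⊤ : ℕ∞) (F m)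

/-- All coefficients of a Laurent series are smooth. -/
def SmLau.Smooth {N : ℕ} (F : SmLau N) : Prop := ∀ m, ContDiff ℝ (⊤ : ℕ∞) (F m)

/-- The Moyal star-product on `C^∞(ℝ^N,ℂ)[[ℏ]]` for a constant matrix `π`. -/
def fMul {N : ℕ} (π : Matrix (Fin N) (Fin N) ℂ) (F G : SmSer N) : SmSer N :=
  moyalN xDf π F G

/-- The Moyal star-product on Laurent series. -/
def fMulZ {N : ℕ} (π : Matrix (Fin N) (Fin N) ℂ) (F G : SmLau N) : SmLau N :=
  moyalZ xDf π F G

/-- The Moyal star-product with `ℏ`-dependent matrix `π(ℏ) = π₀ + ℏπ₁`. -/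
def fMulH {N : ℕ} (π0 π1 : Matrix (Fin N) (Fin N) ℂ) (F G : SmSer N) : SmSer N :=
  moyalNH xDf π0 π1 F G

/-- The constant series `1`. -/
def oneSer (N : ℕ) : SmSer N := fun m => if m = 0 then (fun _ => 1) else 0

/-- The standard Poisson bracket `{f,g} = Σ π^{ij} ∂_i f ∂_j g` on `ℝ^{2n}`. -/
def pb (n : ℕ) (f g : SmFn (2 * n)) : SmFn (2 * n) :=
  fun x => ∑ i, ∑ j, stdPi n i j * xDf i f x * xDf j g x

/-! ### Multidifferential operators and star-products -/

/-- A `k`-multidifferential operator on `C^∞(ℝ^N,ℂ)`: a finite sum of terms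
`u(x) (∂^{α₁}f₁)⋯(∂^{α_k}f_k)`, recorded by its finitely many coefficients. -/
abbrev MDOp (N k : ℕ) := (Fin k → (Fin N →₀ ℕ)) →₀ SmFn N

/-- Action of a multidifferential operator. -/
def MDOp.app {N k : ℕ} (c : MDOp N k) (f : Fin k → SmFn N) : SmFn N :=
  fun x => c.sum fun T u => u x * ∏ t, xDfM (T t) (f t) x

/-- A multidifferential operator has smooth coefficients. -/
def MDOp.Smooth {N k : ℕ} (c : MDOp N k) : Prop := ∀ T, ContDiff ℝ (⊤ : ℕ∞) (c T)

/-- A family of bidifferential operators `C_k`, extended `ℂ[[ℏ]]`-bilinearly: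
`F ⋆ G = Σ ℏ^{k+l+l'} C_k(F_l, G_{l'})`. -/
def starN {N : ℕ} (C : ℕ → MDOp N 2) (F G : SmSer N) : SmSer N :=
  fun m => ∑ k ∈ Finset.range (m + 1), ∑ l ∈ Finset.range (m - k + 1),
    MDOp.app (C k) ![F l, G (m - k - l)]

/-- The `ℂ[ℏ⁻¹,ℏ]]`-bilinear extension of a star-product to Laurent series. -/
def starZ {N : ℕ} (C : ℕ → MDOp N 2) (F G : SmLau N) : SmLau N :=
  fun m => ∑ᶠ p : ℕ × ℤ, MDOp.app (C p.1) ![F p.2, G (m - p.1 - p.2)]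

/-- Action of a Laurent cochain `c = Σ_l ℏ^l c_l` of multidifferential operators
on a `k`-tuple of Laurent series. -/
def lac {N k : ℕ} (cc : ℤ → MDOp N k) (u : Fin k → SmLau N) : SmLau N :=
  fun m => ∑ᶠ v : Fin k → ℤ, MDOp.app (cc (m - ∑ t, v t)) fun t => u t (v t)

/-- A differential star-product on `ℝ^{2n}` quantizing the standard symplectic
structure: `f ⋆ g = Σ ℏ^k C_k(f,g)` with `C_k` bidifferential, `C₀(f,g) = fg`,
`1` a unit, `⋆` associative, and `C₁(f,g) − C₁(g,f) = −i{f,g}`. -/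
structure DiffStar (n : ℕ) where
  C : ℕ → MDOp (2 * n) 2
  smooth : ∀ k, MDOp.Smooth (C k)
  C0 : ∀ f g : SmFn (2 * n), MDOp.app (C 0) ![f, g] = f * g
  unit_left : ∀ F : SmSer (2 * n), SmSer.Smooth F → starN C (oneSer (2 * n)) F = F
  unit_right : ∀ F : SmSer (2 * n), SmSer.Smooth F → starN C F (oneSer (2 * n)) = F
  assoc : ∀ F G H : SmSer (2 * n), SmSer.Smooth F → SmSer.Smooth G → SmSer.Smooth H →
    starN C (starN C F G) H = starN C F (starN C G H)
  C1skew : ∀ f g : SmFn (2 * n), ContDiff ℝ (⊤ : ℕ∞) f → ContDiff ℝ (⊤ : ℕ∞) g →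
    MDOp.app (C 1) ![f, g] - MDOp.app (C 1) ![g, f] = fun x => -Complex.I * pb n f g x

/-! ### Hochschild coboundary -/

/-- The Hochschild coboundary `b̃` of a `k`-cochain with respect to a product `mul`. -/
def hoch {A : Type*} [AddCommGroup A] (mul : A → A → A) {k : ℕ}
    (c : (Fin k → A) → A) : (Fin (k + 1) → A) → A :=
  fun u =>
    mul (u 0) (c fun t => u t.succ)
      + ∑ i : Fin k, ((-1 : ℤ) ^ ((i : ℕ) + 1)) •
          c (fun j => if (j : ℕ) < (i : ℕ) then u j.castSucc
            else if (j : ℕ) = (i : ℕ) then mul (u j.castSucc) (u j.succ)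
            else u j.succ)
      + ((-1 : ℤ) ^ (k + 1)) • mul (c fun t => u t.castSucc) (u (Fin.last k))

/-! ### Formal differential operators on ℂ[[y]] -/

/-- A formal `k`-differential operator on `ℂ[[y^1,…,y^N]]`:
`c(a₁,…,a_k) = Σ_T u^T (∂^{T 1}a₁)⋯(∂^{T k}a_k)` with coefficients
`u^T ∈ ℂ[[y]]` such that for each degree `d` only finitely many tuples `T` have a
coefficient containing a nonzero monomial of degree `≤ d`. -/
structure FDOp (N k : ℕ) where
  u : (Fin k → (Fin N →₀ ℕ)) → Wc N
  fin : ∀ d : ℕ,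
    {T : Fin k → (Fin N →₀ ℕ) | ∃ β : Fin N →₀ ℕ,
      (β.sum fun _ e => e) ≤ d ∧ MvPowerSeries.coeff (R := ℂ) β (u T) ≠ 0}.Finite

/-- Action of a formal differential operator (the defining sum converges in the
`y`-adic topology; each coefficient receives only finitely many contributions). -/
def FDOp.app {N k : ℕ} (P : FDOp N k) (a : Fin k → Wc N) : Wc N :=
  Wc.mk fun β => ∑ᶠ T : Fin k → (Fin N →₀ ℕ),
    MvPowerSeries.coeff (R := ℂ) β (P.u T * ∏ t, yDM (T t) (a t))

/-- Action of a Laurent cochain `c = Σ_l ℏ^l c_l` of formal differential operators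
on a `k`-tuple of elements of `W⁺`. -/
def flac {N k : ℕ} (cc : ℤ → FDOp N k) (a : Fin k → WaZ N) : WaZ N :=
  fun m => ∑ᶠ v : Fin k → ℤ, FDOp.app (cc (m - ∑ t, v t)) fun t => a t (v t)

/-! ### Flat sections, Taylor series and quantum exponential -/

/-- Fiberwise Taylor series of a smooth function at `x`. -/
def taylorW {N : ℕ} (f : SmFn N) (x : Fin N → ℝ) : Wc N :=
  Wc.mk fun β => (∏ i : Fin N, ((β i).factorial : ℂ))⁻¹ * xDfM β f x

/-- Sections of the Weyl bundle over `ℝ^{2n}` (W-valued 0-forms). -/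
abbrev Sect (n : ℕ) := Pt n → Wa (2 * n)

/-- The fiberwise Taylor lift of a series of smooth functions. -/
def taylorS {n : ℕ} (F : SmSer (2 * n)) : Sect n := fun x m => taylorW (F m) x

/-- A section has smooth coefficients. -/
def Sect.Smooth {n : ℕ} (u : Sect n) : Prop :=
  ∀ m β, ContDiff ℝ (⊤ : ℕ∞) fun x => MvPowerSeries.coeff (R := ℂ) β (u x m)

/-- A section is flat for `D = −δ + d`: its component equations read
`∂u/∂x^i = ∂u/∂y^i` for all `i`. -/
def Sect.Flat {n : ℕ} (u : Sect n) : Prop :=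
  ∀ (i : Fin (2 * n)) (x : Pt n), xD i u x = yDa i (u x)

/-- The symbol map `σ(u) = u|_{y=0}`. -/
def sigma {n : ℕ} (u : Sect n) : SmSer (2 * n) :=
  fun m x => MvPowerSeries.coeff (R := ℂ) 0 (u x m)

/-- Fiberwise Moyal–Weyl product of sections. -/
def wmulS {n : ℕ} (u v : Sect n) : Sect n := fun x => wmul (u x) (v x)

/-! ### Vector fields and Liouville-type operators -/

/-- Action of a vector field `X = Σ_j X^j ∂_j` on a function. -/
def XAct {N : ℕ} (X : Fin N → SmFn N) (f : SmFn N) : SmFn N :=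
  fun x => ∑ j, X j x * xDf j f x

/-- A smooth function viewed as a series concentrated in `ℏ`-degree `0`. -/
def embS {N : ℕ} (f : SmFn N) : SmSer N := fun m => if m = 0 then f else 0

/-- The Hochschild coboundary `b̃X(f,g) = f⋆(Xg) − X(f⋆g) + (Xf)⋆g` of a vector
field, for the Moyal star-product with constant matrix `π`. -/
def bXMoyal {N : ℕ} (π : Matrix (Fin N) (Fin N) ℂ) (X : Fin N → SmFn N)
    (f g : SmFn N) : SmSer N :=
  fMul π (embS f) (embS (XAct X g)) - (fun m => XAct X (fMul π (embS f) (embS g) m))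
    + fMul π (embS (XAct X f)) (embS g)

/-- The operator `ℏ ∂_ℏ + X` on `C^∞(ℝ^N,ℂ)[[ℏ]]`. -/
def LOp {N : ℕ} (X : Fin N → SmFn N) (F : SmSer N) : SmSer N :=
  fun m x => (m : ℂ) * F m x + XAct X (F m) x

/-- The derivative of a star-product with respect to `ℏ`:
`c(f,g) = Σ_{k≥1} k ℏ^{k-1} C_k(f,g)`, extended `ℂ[[ℏ]]`-bilinearly. -/
def dStar {N : ℕ} (C : ℕ → MDOp N 2) (F G : SmSer N) : SmSer N :=
  fun m => ∑ k ∈ Finset.Icc 1 (m + 1), (k : ℂ) •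
    ∑ l ∈ Finset.range (m + 1 - k + 1), MDOp.app (C k) ![F l, G (m + 1 - k - l)]

end StarPaper
namespace StarPaper

/-! A vector field differentiates the `k`-th Moyal term
`P_k(f, g) = π^{i₁j₁}⋯π^{i_kj_k} (∂_{i₁}⋯∂_{i_k} f) (∂_{j₁}⋯∂_{j_k} g)` by the Leibniz rule, up to
its commutators with the `2k` partial derivatives. For affine `X` these commutators
`[∂_i, X] = (∂_i X^j) ∂_j` have constant coefficients, and together they act on the coefficient
tensor `π^{⊗k}` one slot at a time; the rescaling condition turns each slot into a copy of
`π^{⊗k}`, so `P_k(Xf, g) + P_k(f, Xg) = X P_k(f, g) + k P_k(f, g)`. As `P_k` carries `ℏ^k`, the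
defect `k P_k` is exactly what `ℏ∂_ℏ` contributes. -/

open Finset Function
open scoped Matrix

section WeylPairing

variable {R : Type*} [CommRing R] {N k : ℕ}

def weylPairing (π : Matrix (Fin N) (Fin N) R) (p q : (Fin k → Fin N) → R) : R :=
  ∑ i, ∑ j, (∏ t, π (i t) (j t)) * (p i * q j)

def slotDeriv (b : Matrix (Fin N) (Fin N) R) (s : Fin k) (p : (Fin k → Fin N) → R)
    (i : Fin k → Fin N) : R :=
  ∑ l, b l (i s) * p (update i s l)

-- The linear part of an affine field, acting on `k`-tensors as a derivation of the tensor power.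
def tensorDeriv (b : Matrix (Fin N) (Fin N) R) (p : (Fin k → Fin N) → R) :
    (Fin k → Fin N) → R :=
  ∑ s, slotDeriv b s p

lemma tensorDeriv_apply (b : Matrix (Fin N) (Fin N) R) (p : (Fin k → Fin N) → R)
    (i : Fin k → Fin N) : tensorDeriv b p i = ∑ s, ∑ l, b l (i s) * p (update i s l) := by
  simp only [tensorDeriv, slotDeriv, Finset.sum_apply]

lemma tensorDeriv_cons (b : Matrix (Fin N) (Fin N) R) (p : (Fin (k + 1) → Fin N) → R)
    (c : Fin N) (w : Fin k → Fin N) :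
    tensorDeriv b p (Fin.cons c w) =
      ∑ l, b l c * p (Fin.cons l w) + tensorDeriv b (fun u => p (Fin.cons c u)) w := by
  simp only [tensorDeriv_apply, Fin.sum_univ_succ, Fin.cons_zero, Fin.cons_succ,
    Fin.update_cons_zero, ← Fin.cons_update]

lemma weylPairing_add_left (π : Matrix (Fin N) (Fin N) R) (p p' q : (Fin k → Fin N) → R) :
    weylPairing π (p + p') q = weylPairing π p q + weylPairing π p' q := by
  simp only [weylPairing, Pi.add_apply, add_mul, mul_add, sum_add_distrib]

lemma weylPairing_add_right (π : Matrix (Fin N) (Fin N) R) (p q q' : (Fin k → Fin N) → R) :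
    weylPairing π p (q + q') = weylPairing π p q + weylPairing π p q' := by
  simp only [weylPairing, Pi.add_apply, mul_add, sum_add_distrib]

lemma weylPairing_smul_left (π : Matrix (Fin N) (Fin N) R) (c : R) (p q : (Fin k → Fin N) → R) :
    weylPairing π (c • p) q = c * weylPairing π p q := by
  simp only [weylPairing, Pi.smul_apply, smul_eq_mul, mul_sum]
  exact sum_congr rfl fun _ _ => sum_congr rfl fun _ _ => by ring

lemma weylPairing_smul_right (π : Matrix (Fin N) (Fin N) R) (c : R) (p q : (Fin k → Fin N) → R) :
    weylPairing π p (c • q) = c * weylPairing π p q := by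
  simp only [weylPairing, Pi.smul_apply, smul_eq_mul, mul_sum]
  exact sum_congr rfl fun _ _ => sum_congr rfl fun _ _ => by ring

lemma weylPairing_sum_left {ι : Type*} (π : Matrix (Fin N) (Fin N) R) (u : Finset ι)
    (p : ι → (Fin k → Fin N) → R) (q : (Fin k → Fin N) → R) :
    weylPairing π (∑ a ∈ u, p a) q = ∑ a ∈ u, weylPairing π (p a) q := by
  simp only [weylPairing, Finset.sum_apply, sum_mul, mul_sum]
  conv_rhs => rw [sum_comm]
  exact sum_congr rfl fun _ _ => by rw [sum_comm]

lemma weylPairing_sum_right {ι : Type*} (π : Matrix (Fin N) (Fin N) R) (u : Finset ι)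
    (p : (Fin k → Fin N) → R) (q : ι → (Fin k → Fin N) → R) :
    weylPairing π p (∑ a ∈ u, q a) = ∑ a ∈ u, weylPairing π p (q a) := by
  simp only [weylPairing, Finset.sum_apply, mul_sum]
  conv_rhs => rw [sum_comm]
  exact sum_congr rfl fun _ _ => by rw [sum_comm]

lemma sum_sum_update_swap {ι α M : Type*} [DecidableEq ι] [Fintype ι] [Fintype α]
    [AddCommMonoid M] (s : ι) (F : (ι → α) → α → M) :
    ∑ i, ∑ l, F i l = ∑ i, ∑ l, F (update i s l) (i s) := by
  have hinv : Involutive fun z : (ι → α) × α => (update z.1 s z.2, z.1 s) := fun z => by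
    simp
  simp only [← Fintype.sum_prod_type']
  exact Fintype.sum_bijective _ hinv.bijective _ _ fun z => by simp

lemma sum_slotDeriv_mul (b : Matrix (Fin N) (Fin N) R) (s : Fin k)
    (p c : (Fin k → Fin N) → R) :
    ∑ i, slotDeriv b s p i * c i = ∑ i, p i * ∑ l, b (i s) l * c (update i s l) := by
  simp only [slotDeriv, sum_mul, mul_sum]
  rw [sum_sum_update_swap s]
  simp only [update_self, update_idem, update_eq_self]
  exact sum_congr rfl fun _ _ => sum_congr rfl fun _ _ => by ring

lemma prod_apply_update_eq_mul_prod_erase (f : Fin k → Fin N → R) (i : Fin k → Fin N) (s : Fin k)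
    (l : Fin N) : ∏ t, f t (update i s l t) = f s l * ∏ t ∈ univ.erase s, f t (i t) := by
  rw [← mul_prod_erase univ _ (mem_univ s), update_self]
  congr 1
  exact prod_congr rfl fun t ht => by rw [update_of_ne (ne_of_mem_erase ht)]

lemma prod_update_left (π : Matrix (Fin N) (Fin N) R) (i j : Fin k → Fin N) (s : Fin k)
    (l : Fin N) :
    ∏ t, π (update i s l t) (j t) = π l (j s) * ∏ t ∈ univ.erase s, π (i t) (j t) :=
  prod_apply_update_eq_mul_prod_erase (fun t a => π a (j t)) i s l

lemma prod_update_right (π : Matrix (Fin N) (Fin N) R) (i j : Fin k → Fin N) (s : Fin k)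
    (l : Fin N) :
    ∏ t, π (i t) (update j s l t) = π (i s) l * ∏ t ∈ univ.erase s, π (i t) (j t) :=
  prod_apply_update_eq_mul_prod_erase (fun t a => π (i t) a) j s l

variable {π b : Matrix (Fin N) (Fin N) R}

theorem weylPairing_slotDeriv_add (hL : b * π + π * bᵀ = π)
    (s : Fin k) (p q : (Fin k → Fin N) → R) :
    weylPairing π (slotDeriv b s p) q + weylPairing π p (slotDeriv b s q) =
      weylPairing π p q := by
  set E : (Fin k → Fin N) → (Fin k → Fin N) → R := fun i j =>
    (∏ t ∈ univ.erase s, π (i t) (j t)) * (p i * q j)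
  have hleft : weylPairing π (slotDeriv b s p) q = ∑ i, ∑ j, (b * π) (i s) (j s) * E i j := by
    calc weylPairing π (slotDeriv b s p) q
        = ∑ i, slotDeriv b s p i * ∑ j, (∏ t, π (i t) (j t)) * q j := by
          simp only [weylPairing, mul_sum]
          exact sum_congr rfl fun _ _ => sum_congr rfl fun _ _ => by ring
      _ = ∑ i, p i * ∑ l, b (i s) l * ∑ j, (∏ t, π (update i s l t) (j t)) * q j :=
          sum_slotDeriv_mul b s p _
      _ = ∑ i, ∑ j, (b * π) (i s) (j s) * E i j := by
          simp only [prod_update_left, E, Matrix.mul_apply, mul_sum, sum_mul]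
          refine sum_congr rfl fun i _ => ?_
          rw [sum_comm]
          exact sum_congr rfl fun _ _ => sum_congr rfl fun _ _ => by ring
  have hright : weylPairing π p (slotDeriv b s q) = ∑ i, ∑ j, (π * bᵀ) (i s) (j s) * E i j := by
    calc weylPairing π p (slotDeriv b s q)
        = ∑ j, slotDeriv b s q j * ∑ i, (∏ t, π (i t) (j t)) * p i := by
          simp only [weylPairing, mul_sum]
          rw [sum_comm]
          exact sum_congr rfl fun _ _ => sum_congr rfl fun _ _ => by ring
      _ = ∑ j, q j * ∑ l, b (j s) l * ∑ i, (∏ t, π (i t) (update j s l t)) * p i :=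
          sum_slotDeriv_mul b s q _
      _ = ∑ i, ∑ j, (π * bᵀ) (i s) (j s) * E i j := by
          simp only [prod_update_right, E, Matrix.mul_apply, Matrix.transpose_apply, mul_sum,
            sum_mul]
          conv_lhs => enter [2, j]; rw [sum_comm]
          rw [sum_comm]
          refine sum_congr rfl fun _ _ => sum_congr rfl fun _ _ => sum_congr rfl fun _ _ => ?_
          ring
  have hfull : weylPairing π p q = ∑ i, ∑ j, π (i s) (j s) * E i j :=
    sum_congr rfl fun i _ => sum_congr rfl fun j _ => by
      rw [← mul_prod_erase univ (fun t => π (i t) (j t)) (mem_univ s), mul_assoc]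
  rw [hleft, hright, hfull, ← sum_add_distrib]
  refine sum_congr rfl fun i _ => ?_
  rw [← sum_add_distrib]
  refine sum_congr rfl fun j _ => ?_
  rw [← add_mul, ← Matrix.add_apply, hL]

theorem weylPairing_tensorDeriv_add (hL : b * π + π * bᵀ = π)
    (p q : (Fin k → Fin N) → R) :
    weylPairing π (tensorDeriv b p) q + weylPairing π p (tensorDeriv b q) =
      k * weylPairing π p q := by
  simp only [tensorDeriv, weylPairing_sum_left, weylPairing_sum_right, ← sum_add_distrib,
    weylPairing_slotDeriv_add hL, sum_const, card_univ, Fintype.card_fin, nsmul_eq_mul]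

end WeylPairing

section Calculus

variable {N : ℕ} {f g : SmFn N} {x : Fin N → ℝ}

lemma contDiff_xDf (hf : ContDiff ℝ (⊤ : ℕ∞) f) (i : Fin N) : ContDiff ℝ (⊤ : ℕ∞) (xDf i f) :=
  (hf.fderiv_right (by simp)).clm_apply contDiff_const

lemma xDf_fun_add (hf : DifferentiableAt ℝ f x) (hg : DifferentiableAt ℝ g x) (i : Fin N) :
    xDf i (fun y => f y + g y) x = xDf i f x + xDf i g x := by
  simp [xDf, fderiv_fun_add hf hg]

lemma xDf_fun_sum {ι : Type*} (u : Finset ι) {F : ι → SmFn N}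
    (hF : ∀ a ∈ u, DifferentiableAt ℝ (F a) x) (i : Fin N) :
    xDf i (fun y => ∑ a ∈ u, F a y) x = ∑ a ∈ u, xDf i (F a) x := by
  simp [xDf, fderiv_fun_sum hF]

lemma xDf_const_mul (hf : DifferentiableAt ℝ f x) (c : ℂ) (i : Fin N) :
    xDf i (fun y => c * f y) x = c * xDf i f x := by
  simp [xDf, fderiv_const_mul hf c]

lemma xDf_fun_mul (hf : DifferentiableAt ℝ f x) (hg : DifferentiableAt ℝ g x) (i : Fin N) :
    xDf i (fun y => f y * g y) x = xDf i f x * g x + f x * xDf i g x := by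
  simp only [xDf, fderiv_fun_mul hf hg, add_apply, smul_apply, smul_eq_mul]
  ring

lemma xDf_comm (hf : ContDiff ℝ (⊤ : ℕ∞) f) (i j : Fin N) :
    xDf i (xDf j f) x = xDf j (xDf i f) x := by
  have hsymm : IsSymmSndFDerivAt ℝ f x := hf.contDiffAt.isSymmSndFDerivAt <| by
    simp only [minSmoothness_of_isRCLikeNormedField]
    exact WithTop.coe_le_coe.mpr le_top
  have hdiff : DifferentiableAt ℝ (fderiv ℝ f) x :=
    ((hf.fderiv_right (m := (⊤ : ℕ∞)) (by simp)).differentiable (by simp)).differentiableAt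
  have hsnd : ∀ (a : Fin N) (v : Fin N → ℝ),
      xDf a (fun y => fderiv ℝ f y v) x = fderiv ℝ (fderiv ℝ f) x (Pi.single a 1) v := by
    intro a v
    simp [xDf, fderiv_clm_apply hdiff (differentiableAt_const v)]
  exact (hsnd i _).trans ((hsymm _ _).trans (hsnd j _).symm)

end Calculus

section VectorField

variable {N : ℕ} {X : Fin N → SmFn N} {f g : SmFn N} {x : Fin N → ℝ}

lemma contDiff_XAct (hX : ∀ j, ContDiff ℝ (⊤ : ℕ∞) (X j)) (hf : ContDiff ℝ (⊤ : ℕ∞) f) :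
    ContDiff ℝ (⊤ : ℕ∞) (XAct X f) :=
  ContDiff.sum fun j _ => (hX j).mul (contDiff_xDf hf j)

lemma XAct_fun_sum {ι : Type*} (u : Finset ι) {F : ι → SmFn N}
    (hF : ∀ a ∈ u, DifferentiableAt ℝ (F a) x) :
    XAct X (fun y => ∑ a ∈ u, F a y) x = ∑ a ∈ u, XAct X (F a) x := by
  simp only [XAct, xDf_fun_sum u hF, mul_sum]
  exact sum_comm

lemma XAct_const_mul (hf : DifferentiableAt ℝ f x) (c : ℂ) :
    XAct X (fun y => c * f y) x = c * XAct X f x := by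
  simp only [XAct, xDf_const_mul hf, mul_sum]
  exact sum_congr rfl fun _ _ => by ring

lemma XAct_fun_mul (hf : DifferentiableAt ℝ f x) (hg : DifferentiableAt ℝ g x) :
    XAct X (fun y => f y * g y) x = XAct X f x * g x + f x * XAct X g x := by
  simp only [XAct, xDf_fun_mul hf hg, sum_mul, mul_sum, ← sum_add_distrib]
  exact sum_congr rfl fun _ _ => by ring

def affineField (a : Fin N → ℂ) (b : Matrix (Fin N) (Fin N) ℂ) : Fin N → SmFn N :=
  fun j x => a j + ∑ k, b j k * (x k : ℂ)

variable {a : Fin N → ℂ} {b : Matrix (Fin N) (Fin N) ℂ}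

lemma hasFDerivAt_affineField (j : Fin N) (x : Fin N → ℝ) :
    HasFDerivAt (affineField a b j)
      (∑ k, b j k • Complex.ofRealCLM.comp (ContinuousLinearMap.proj k :
        (Fin N → ℝ) →L[ℝ] ℝ)) x :=
  (HasFDerivAt.fun_sum fun k _ => (Complex.ofRealCLM.comp (ContinuousLinearMap.proj k :
    (Fin N → ℝ) →L[ℝ] ℝ)).hasFDerivAt.const_mul (b j k)).const_add (a j)

lemma contDiff_affineField (j : Fin N) : ContDiff ℝ (⊤ : ℕ∞) (affineField a b j) :=
  contDiff_const.add <| ContDiff.sum fun k _ =>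
    contDiff_const.mul (Complex.ofRealCLM.contDiff.comp (contDiff_apply ℝ ℝ k))

lemma xDf_affineField (j k : Fin N) (x : Fin N → ℝ) : xDf k (affineField a b j) x = b j k := by
  simp [xDf, (hasFDerivAt_affineField j x).fderiv, Pi.single_apply,
    apply_ite (Complex.ofReal ·)]

lemma xDf_XAct_affineField (hf : ContDiff ℝ (⊤ : ℕ∞) f) (m : Fin N) (x : Fin N → ℝ) :
    xDf m (XAct (affineField a b) f) x =
      XAct (affineField a b) (xDf m f) x + ∑ j, b j m * xDf j f x := by
  have hX : ∀ j, ContDiff ℝ (⊤ : ℕ∞) (affineField a b j) := contDiff_affineField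
  unfold XAct
  rw [xDf_fun_sum _ fun j _ =>
    ((hX j).mul (contDiff_xDf hf j)).contDiffAt.differentiableAt (by simp)]
  simp only [xDf_fun_mul ((hX _).contDiffAt.differentiableAt (by simp))
      ((contDiff_xDf hf _).contDiffAt.differentiableAt (by simp)),
    xDf_affineField, xDf_comm hf m, sum_add_distrib]
  ring

end VectorField

section IteratedDerivatives

variable {N : ℕ} {f g : SmFn N} {x : Fin N → ℝ}

lemma iterD_cons {R : Type*} {k : ℕ} (D : Fin N → R → R) (c : Fin N) (w : Fin k → Fin N)
    (r : R) : iterD D (Fin.cons c w) r = D c (iterD D w r) :=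
  rfl

lemma contDiff_iterD (hf : ContDiff ℝ (⊤ : ℕ∞) f) :
    ∀ {k : ℕ} (v : Fin k → Fin N), ContDiff ℝ (⊤ : ℕ∞) (iterD xDf v f)
  | 0, _ => hf
  | _ + 1, v => contDiff_xDf (contDiff_iterD hf fun t => v t.succ) (v 0)

lemma iterD_const_mul_add (hf : ContDiff ℝ (⊤ : ℕ∞) f) (hg : ContDiff ℝ (⊤ : ℕ∞) g) (c : ℂ) :
    ∀ {k : ℕ} (v : Fin k → Fin N),
      iterD xDf v (fun y => c * f y + g y) = fun y => c * iterD xDf v f y + iterD xDf v g y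
  | 0, _ => rfl
  | _ + 1, v => by
    have hf' := (contDiff_iterD hf fun t => v t.succ).differentiable (by simp)
    have hg' := (contDiff_iterD hg fun t => v t.succ).differentiable (by simp)
    funext y
    show xDf (v 0) (iterD xDf _ (fun y => c * f y + g y)) y = _
    rw [iterD_const_mul_add hf hg c, xDf_fun_add ((hf' y).const_mul c) (hg' y),
      xDf_const_mul (hf' y)]
    rfl

lemma xDf_tensorDeriv {k : ℕ} (b : Matrix (Fin N) (Fin N) ℂ) {P : (Fin k → Fin N) → SmFn N}
    (hP : ∀ u, DifferentiableAt ℝ (P u) x) (c : Fin N) (w : Fin k → Fin N) :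
    xDf c (fun y => tensorDeriv b (fun u => P u y) w) x =
      tensorDeriv b (fun u => xDf c (P u) x) w := by
  simp only [tensorDeriv_apply]
  rw [xDf_fun_sum _ fun s _ => DifferentiableAt.fun_sum fun l _ => (hP _).const_mul _]
  refine sum_congr rfl fun s _ => ?_
  rw [xDf_fun_sum _ fun l _ => (hP _).const_mul _]
  exact sum_congr rfl fun l _ => xDf_const_mul (hP _) _ c

lemma differentiableAt_tensorDeriv {k : ℕ} (b : Matrix (Fin N) (Fin N) ℂ)
    {P : (Fin k → Fin N) → SmFn N} (hP : ∀ u, DifferentiableAt ℝ (P u) x) (w : Fin k → Fin N) :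
    DifferentiableAt ℝ (fun y => tensorDeriv b (fun u => P u y) w) x := by
  simp only [tensorDeriv_apply]
  exact DifferentiableAt.fun_sum fun s _ => DifferentiableAt.fun_sum fun l _ => (hP _).const_mul _

variable {a : Fin N → ℂ} {b : Matrix (Fin N) (Fin N) ℂ}

lemma iterD_XAct_affineField (hf : ContDiff ℝ (⊤ : ℕ∞) f) :
    ∀ {k : ℕ} (v : Fin k → Fin N) (x : Fin N → ℝ),
      iterD xDf v (XAct (affineField a b) f) x =
        XAct (affineField a b) (iterD xDf v f) x + tensorDeriv b (fun u => iterD xDf u f x) v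
  | 0, _, _ => by
    simp only [tensorDeriv, univ_eq_empty, sum_empty, Finset.sum_apply, add_zero]
    rfl
  | k + 1, v, x => by
    obtain ⟨c, w, rfl⟩ : ∃ c w, v = Fin.cons c w :=
      ⟨v 0, Fin.tail v, (Fin.cons_self_tail v).symm⟩
    have hd : ∀ u : Fin k → Fin N, Differentiable ℝ (iterD xDf u f) :=
      fun u => (contDiff_iterD hf u).differentiable (by simp)
    have hXw := (contDiff_XAct (contDiff_affineField (a := a) (b := b))
      (contDiff_iterD hf w)).differentiable (by simp) x
    rw [iterD_cons, funext (iterD_XAct_affineField hf w),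
      xDf_fun_add hXw (differentiableAt_tensorDeriv b (fun u => hd u x) w),
      xDf_tensorDeriv b (fun u => hd u x), xDf_XAct_affineField (contDiff_iterD hf w),
      tensorDeriv_cons]
    simp only [iterD_cons]
    ring

end IteratedDerivatives

section MoyalTerm

variable {N : ℕ} {π : Matrix (Fin N) (Fin N) ℂ} {f f' g g' : SmFn N}

lemma moyalTerm_xDf_apply (k : ℕ) (f g : SmFn N) (x : Fin N → ℝ) :
    moyalTerm xDf π k f g x = (-Complex.I / 2) ^ k / (k.factorial : ℂ) *
      weylPairing π (fun i : Fin k → Fin N => iterD xDf i f x) (fun j => iterD xDf j g x) := by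
  simp [moyalTerm, weylPairing, Finset.sum_apply, mul_sum]

lemma contDiff_moyalTerm (k : ℕ) (hf : ContDiff ℝ (⊤ : ℕ∞) f) (hg : ContDiff ℝ (⊤ : ℕ∞) g) :
    ContDiff ℝ (⊤ : ℕ∞) (moyalTerm xDf π k f g) := by
  rw [funext (moyalTerm_xDf_apply k f g)]
  exact contDiff_const.mul <| ContDiff.sum fun i _ => ContDiff.sum fun j _ =>
    contDiff_const.mul ((contDiff_iterD hf i).mul (contDiff_iterD hg j))

lemma moyalTerm_const_mul_add_left (k : ℕ) (c : ℂ) (hf : ContDiff ℝ (⊤ : ℕ∞) f)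
    (hf' : ContDiff ℝ (⊤ : ℕ∞) f') (g : SmFn N) (x : Fin N → ℝ) :
    moyalTerm xDf π k (fun y => c * f y + f' y) g x =
      c * moyalTerm xDf π k f g x + moyalTerm xDf π k f' g x := by
  have h : (fun i : Fin k → Fin N => iterD xDf i (fun y => c * f y + f' y) x) =
      c • (fun i => iterD xDf i f x) + fun i => iterD xDf i f' x :=
    funext fun i => congrFun (iterD_const_mul_add hf hf' c i) x
  simp only [moyalTerm_xDf_apply, h, weylPairing_add_left, weylPairing_smul_left]
  ring

lemma moyalTerm_const_mul_add_right (k : ℕ) (c : ℂ) (f : SmFn N) (hg : ContDiff ℝ (⊤ : ℕ∞) g)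
    (hg' : ContDiff ℝ (⊤ : ℕ∞) g') (x : Fin N → ℝ) :
    moyalTerm xDf π k f (fun y => c * g y + g' y) x =
      c * moyalTerm xDf π k f g x + moyalTerm xDf π k f g' x := by
  have h : (fun j : Fin k → Fin N => iterD xDf j (fun y => c * g y + g' y) x) =
      c • (fun j => iterD xDf j g x) + fun j => iterD xDf j g' x :=
    funext fun j => congrFun (iterD_const_mul_add hg hg' c j) x
  simp only [moyalTerm_xDf_apply, h, weylPairing_add_right, weylPairing_smul_right]
  ring

lemma XAct_weylPairing {k : ℕ} (X : Fin N → SmFn N) {P Q : (Fin k → Fin N) → SmFn N}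
    {x : Fin N → ℝ} (hP : ∀ i, DifferentiableAt ℝ (P i) x)
    (hQ : ∀ j, DifferentiableAt ℝ (Q j) x) :
    XAct X (fun y => weylPairing π (fun i => P i y) (fun j => Q j y)) x =
      weylPairing π (fun i => XAct X (P i) x) (fun j => Q j x) +
        weylPairing π (fun i => P i x) (fun j => XAct X (Q j) x) := by
  have hPQ : ∀ i j, DifferentiableAt ℝ (fun y => P i y * Q j y) x :=
    fun i j => (hP i).mul (hQ j)
  unfold weylPairing
  rw [XAct_fun_sum _ fun i _ => DifferentiableAt.fun_sum fun j _ => (hPQ i j).const_mul _,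
    ← sum_add_distrib]
  refine sum_congr rfl fun i _ => ?_
  rw [XAct_fun_sum _ fun j _ => (hPQ i j).const_mul _, ← sum_add_distrib]
  refine sum_congr rfl fun j _ => ?_
  rw [XAct_const_mul (hPQ i j), XAct_fun_mul (hP i) (hQ j)]
  ring

lemma XAct_moyalTerm (X : Fin N → SmFn N) (k : ℕ) (hf : ContDiff ℝ (⊤ : ℕ∞) f)
    (hg : ContDiff ℝ (⊤ : ℕ∞) g) (x : Fin N → ℝ) :
    XAct X (moyalTerm xDf π k f g) x = (-Complex.I / 2) ^ k / (k.factorial : ℂ) *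
      (weylPairing π (fun i : Fin k → Fin N => XAct X (iterD xDf i f) x)
          (fun j => iterD xDf j g x) +
        weylPairing π (fun i : Fin k → Fin N => iterD xDf i f x)
          (fun j => XAct X (iterD xDf j g) x)) := by
  have hd : ∀ {h : SmFn N}, ContDiff ℝ (⊤ : ℕ∞) h → ∀ v : Fin k → Fin N,
      DifferentiableAt ℝ (iterD xDf v h) x :=
    fun hh v => (contDiff_iterD hh v).differentiable (by simp) x
  rw [funext (moyalTerm_xDf_apply k f g), XAct_const_mul, XAct_weylPairing X (hd hf) (hd hg)]
  exact DifferentiableAt.fun_sum fun i _ => DifferentiableAt.fun_sum fun j _ =>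
    ((hd hf i).mul (hd hg j)).const_mul _

variable {a : Fin N → ℂ} {b : Matrix (Fin N) (Fin N) ℂ}

theorem moyalTerm_XAct_add (hL : b * π + π * bᵀ = π)
    (k : ℕ) (hf : ContDiff ℝ (⊤ : ℕ∞) f) (hg : ContDiff ℝ (⊤ : ℕ∞) g) (x : Fin N → ℝ) :
    moyalTerm xDf π k (XAct (affineField a b) f) g x +
        moyalTerm xDf π k f (XAct (affineField a b) g) x =
      XAct (affineField a b) (moyalTerm xDf π k f g) x + k * moyalTerm xDf π k f g x := by
  have hf' : (fun i : Fin k → Fin N => iterD xDf i (XAct (affineField a b) f) x) =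
      (fun i => XAct (affineField a b) (iterD xDf i f) x) +
        tensorDeriv b (fun i => iterD xDf i f x) :=
    funext fun i => iterD_XAct_affineField hf i x
  have hg' : (fun j : Fin k → Fin N => iterD xDf j (XAct (affineField a b) g) x) =
      (fun j => XAct (affineField a b) (iterD xDf j g) x) +
        tensorDeriv b (fun j => iterD xDf j g x) :=
    funext fun j => iterD_XAct_affineField hg j x
  rw [moyalTerm_xDf_apply, moyalTerm_xDf_apply, moyalTerm_xDf_apply, XAct_moyalTerm _ k hf hg,
    hf', hg', weylPairing_add_left, weylPairing_add_right]
  linear_combination (-Complex.I / 2) ^ k / (k.factorial : ℂ) *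
    weylPairing_tensorDeriv_add hL (fun i : Fin k → Fin N => iterD xDf i f x)
      (fun j => iterD xDf j g x)

end MoyalTerm

section StarProduct

variable {N : ℕ} {π : Matrix (Fin N) (Fin N) ℂ} {F G : SmSer N}

lemma fMul_apply (F G : SmSer N) (m : ℕ) (x : Fin N → ℝ) :
    fMul π F G m x = ∑ k ∈ range (m + 1), ∑ l ∈ range (m - k + 1),
      moyalTerm xDf π k (F l) (G (m - k - l)) x := by
  simp [fMul, moyalN, Finset.sum_apply]

lemma XAct_fMul (X : Fin N → SmFn N) (hF : F.Smooth) (hG : G.Smooth) (m : ℕ)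
    (x : Fin N → ℝ) :
    XAct X (fMul π F G m) x = ∑ k ∈ range (m + 1), ∑ l ∈ range (m - k + 1),
      XAct X (moyalTerm xDf π k (F l) (G (m - k - l))) x := by
  have hd : ∀ k l, DifferentiableAt ℝ (moyalTerm xDf π k (F l) (G (m - k - l))) x :=
    fun k l => (contDiff_moyalTerm k (hF l) (hG _)).differentiable (by simp) x
  rw [funext (fMul_apply F G m),
    XAct_fun_sum _ fun k _ => DifferentiableAt.fun_sum fun l _ => hd k l]
  exact sum_congr rfl fun k _ => XAct_fun_sum _ fun l _ => hd k l

variable {a : Fin N → ℂ} {b : Matrix (Fin N) (Fin N) ℂ}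

theorem LOp_affineField_fMul (hL : b * π + π * bᵀ = π)
    (hF : F.Smooth) (hG : G.Smooth) :
    LOp (affineField a b) (fMul π F G) =
      fMul π (LOp (affineField a b) F) G + fMul π F (LOp (affineField a b) G) := by
  have hXF := fun l => contDiff_XAct (contDiff_affineField (a := a) (b := b)) (hF l)
  have hXG := fun l => contDiff_XAct (contDiff_affineField (a := a) (b := b)) (hG l)
  funext m x
  unfold LOp
  simp only [Pi.add_apply, fMul_apply, XAct_fMul _ hF hG, mul_sum, ← sum_add_distrib]
  refine sum_congr rfl fun k hk => sum_congr rfl fun l hl => ?_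
  have hm : ((l + (m - k - l) + k : ℕ) : ℂ) = m := by
    rw [mem_range] at hk hl
    congr 1
    omega
  rw [moyalTerm_const_mul_add_left k _ (hF l) (hXF l),
    moyalTerm_const_mul_add_right k _ _ (hG _) (hXG _)]
  push_cast at hm
  linear_combination -moyalTerm_XAct_add hL k (hF l) (hG (m - k - l)) x -
    moyalTerm xDf π k (F l) (G (m - k - l)) x * hm

end StarProduct

theorem affine_liouville_is_derivation_general (n : ℕ)
    (π : Matrix (Fin (2 * n)) (Fin (2 * n)) ℂ)
    (X : Fin (2 * n) → SmFn (2 * n))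
    (haff : ∃ (a : Fin (2 * n) → ℂ) (b : Matrix (Fin (2 * n)) (Fin (2 * n)) ℂ),
      ∀ j x, X j x = a j + ∑ k, b j k * (x k : ℂ))
    (hLiou : ∀ j k x,
      (∑ l, (π l k * xDf l (X j) x + π j l * xDf l (X k) x)) = π j k) :
    ∀ F G : SmSer (2 * n), SmSer.Smooth F → SmSer.Smooth G →
      LOp X (fMul π F G) = fMul π (LOp X F) G + fMul π F (LOp X G) := by
  obtain ⟨a, b, hX⟩ := haff
  obtain rfl : X = affineField a b := funext fun j => funext (hX j)
  have hL : b * π + π * bᵀ = π := by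
    ext u v
    simpa only [Matrix.add_apply, Matrix.mul_apply, Matrix.transpose_apply, xDf_affineField,
      ← sum_add_distrib, mul_comm (b u _)] using hLiou u v 0
  exact fun F G hF hG => LOp_affineField_fMul hL hF hG

/-- If `X = Σ X^j ∂_j` has affine coefficients and rescales the
constant antisymmetric Poisson matrix `π`, i.e.
`Σ_l (π^{lk} ∂_l X^j + π^{jl} ∂_l X^k) = π^{jk}`, then `ℏ∂_ℏ + X` is a quantum
Liouville operator: a derivation of the Moyal star-product. -/
theorem affine_liouville_is_derivation (n : ℕ)
    (π : Matrix (Fin (2 * n)) (Fin (2 * n)) ℂ) (hskew : ∀ i j, π j i = -π i j)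
    (X : Fin (2 * n) → SmFn (2 * n))
    (haff : ∃ (a : Fin (2 * n) → ℂ) (b : Matrix (Fin (2 * n)) (Fin (2 * n)) ℂ),
      ∀ j x, X j x = a j + ∑ k, b j k * (x k : ℂ))
    (hLiou : ∀ j k x,
      (∑ l, (π l k * xDf l (X j) x + π j l * xDf l (X k) x)) = π j k) :
    ∀ F G : SmSer (2 * n), SmSer.Smooth F → SmSer.Smooth G →
      LOp X (fMul π F G) = fMul π (LOp X F) G + fMul π F (LOp X G) :=
  affine_liouville_is_derivation_general n π X haff hLiou

end StarPaper
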